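/- Let κ, μ₁, μ₂ be positive reals with μ₂ > μ₁, let σ be a real symmetric 3×3 matrix, and let σ' = σ − (tr σ/3)·I be its deviatoric part. For an orthonormal basis B = {a,b,c} of ℝ³ define 2U(B) = (1/(9κ))(tr σ)² + (1/(2μ₁))tr(σ'²) + (1/(2μ₂) − 1/(2μ₁))·(⟨a,σ'a⟩² + ⟨b,σ'b⟩² + ⟨c,σ'c⟩²). Then for every orthonormal basis B: (1/(9κ))(tr σ)² + (1/(2μ₂))tr(σ'²) ≤ 2U(B) ≤ (1/(9κ))(tr σ)² + (1/(2μ₁))tr(σ'²); the upper bound is attained exactly when B is a pure shear basis for σ' (i.e. ⟨a,σ'a⟩ = ⟨b,σ'b⟩ = ⟨c,σ'c⟩ = 0), and the lower bound is attained exactly when a, b, c are eigenvectors of σ' (equivalently of σ). Both bounds are attained: an eigenbasis exists by the spectral theorem, and a pure shear basis exists since tr σ' = 0. -/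
import Mathlib


open Matrix

/-- Three pairwise orthogonal unit vectors in ℝ³ (an orthonormal basis). -/
def ONB3 (a b c : Fin 3 → ℝ) : Prop :=
  a ⬝ᵥ a = 1 ∧ b ⬝ᵥ b = 1 ∧ c ⬝ᵥ c = 1 ∧ a ⬝ᵥ b = 0 ∧ a ⬝ᵥ c = 0 ∧ b ⬝ᵥ c = 0

/-- The deviatoric part σ' = σ − (tr σ/3)·I of a matrix. -/
noncomputable def dev (σ : Matrix (Fin 3) (Fin 3) ℝ) : Matrix (Fin 3) (Fin 3) ℝ :=
  σ - (σ.trace / 3) • (1 : Matrix (Fin 3) (Fin 3) ℝ)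

/-- Twice the strain energy 2U for cubic elasticity with principal elasticities κ, μ₁, μ₂,
stress σ, and cube axes {a,b,c}. -/
noncomputable def twoU (κ μ₁ μ₂ : ℝ) (σ : Matrix (Fin 3) (Fin 3) ℝ)
    (a b c : Fin 3 → ℝ) : ℝ :=
  (1/(9*κ)) * σ.trace^2 + (1/(2*μ₁)) * (dev σ * dev σ).trace +
    (1/(2*μ₂) - 1/(2*μ₁)) *
      ((a ⬝ᵥ (dev σ).mulVec a)^2 + (b ⬝ᵥ (dev σ).mulVec b)^2 + (c ⬝ᵥ (dev σ).mulVec c)^2)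

/- ### Auxiliary lemmas -/

lemma dot_symm (D : Matrix (Fin 3) (Fin 3) ℝ) (hD : D.IsSymm) (x y : Fin 3 → ℝ) :
    x ⬝ᵥ D *ᵥ y = y ⬝ᵥ D *ᵥ x := by
  rw [dotProduct_mulVec, ← mulVec_transpose, hD.eq, dotProduct_comm]

lemma hcomp {a b c : Fin 3 → ℝ} (h : ONB3 a b c) :
    ∀ i j, a i * a j + b i * b j + c i * c j = if i = j then 1 else 0 := by
  obtain ⟨h1, h2, h3, h4, h5, h6⟩ := h
  simp only [dotProduct, Fin.sum_univ_three] at h1 h2 h3 h4 h5 h6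
  have hPP : (Matrix.of ![a, b, c]) * (Matrix.of ![a, b, c])ᵀ = 1 := by
    ext i j
    fin_cases i <;> fin_cases j <;>
      simp [Matrix.mul_apply, Fin.sum_univ_three, Matrix.one_apply, Matrix.vecHead,
        Matrix.vecTail, Matrix.transpose_apply] <;>
      linarith [h1, h2, h3, h4, h5, h6]
  have hPP' : (Matrix.of ![a, b, c])ᵀ * (Matrix.of ![a, b, c]) = 1 :=
    mul_eq_one_comm.mp hPP
  intro i j
  have := congrFun (congrFun hPP' i) j
  simpa [Matrix.mul_apply, Fin.sum_univ_three, Matrix.one_apply, Matrix.vecHead,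
    Matrix.vecTail, Matrix.transpose_apply] using this

lemma expand3 {a b c : Fin 3 → ℝ} (h : ONB3 a b c) (v : Fin 3 → ℝ) :
    v = (a ⬝ᵥ v) • a + (b ⬝ᵥ v) • b + (c ⬝ᵥ v) • c := by
  have hc := hcomp h
  funext j
  have e0 := hc 0 j
  have e1 := hc 1 j
  have e2 := hc 2 j
  fin_cases j <;>
    simp only [Pi.add_apply, Pi.smul_apply, smul_eq_mul, dotProduct, Fin.sum_univ_three] <;>
    simp at e0 e1 e2 ⊢ <;>
    linear_combination (-1 : ℝ) * (v 0 * e0 + v 1 * e1 + v 2 * e2)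

lemma hPtP {a b c : Fin 3 → ℝ} (h : ONB3 a b c) :
    (Matrix.of ![a, b, c])ᵀ * (Matrix.of ![a, b, c]) = 1 := by
  obtain ⟨h1, h2, h3, h4, h5, h6⟩ := h
  simp only [dotProduct, Fin.sum_univ_three] at h1 h2 h3 h4 h5 h6
  apply mul_eq_one_comm.mp
  ext i j
  fin_cases i <;> fin_cases j <;>
    simp [Matrix.mul_apply, Fin.sum_univ_three, Matrix.one_apply, Matrix.vecHead,
      Matrix.vecTail, Matrix.transpose_apply] <;>
    linarith [h1, h2, h3, h4, h5, h6]

lemma Mentry (D : Matrix (Fin 3) (Fin 3) ℝ) (a b c : Fin 3 → ℝ) (i j : Fin 3) :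
    ((Matrix.of ![a, b, c]) * D * (Matrix.of ![a, b, c])ᵀ) i j
      = (![a, b, c] i) ⬝ᵥ D *ᵥ (![a, b, c] j) := by
  fin_cases i <;> fin_cases j <;>
    simp [Matrix.mul_apply, Fin.sum_univ_three, Matrix.mulVec, Matrix.vecMul, dotProduct,
      Matrix.vecHead, Matrix.vecTail, Matrix.transpose_apply] <;> ring

lemma trace_conj (D : Matrix (Fin 3) (Fin 3) ℝ) {a b c : Fin 3 → ℝ} (h : ONB3 a b c) :
    ((Matrix.of ![a, b, c]) * D * (Matrix.of ![a, b, c])ᵀ).trace = D.trace := by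
  rw [Matrix.trace_mul_cycle, hPtP h, Matrix.one_mul]

lemma trace_eq (D : Matrix (Fin 3) (Fin 3) ℝ) {a b c : Fin 3 → ℝ} (h : ONB3 a b c) :
    D.trace = a ⬝ᵥ D *ᵥ a + b ⬝ᵥ D *ᵥ b + c ⬝ᵥ D *ᵥ c := by
  rw [← trace_conj D h, Matrix.trace_fin_three, Mentry, Mentry, Mentry]
  simp

lemma traceDD (D : Matrix (Fin 3) (Fin 3) ℝ) (hD : D.IsSymm) {a b c : Fin 3 → ℝ}
    (h : ONB3 a b c) :
    (D * D).trace = (a ⬝ᵥ D *ᵥ a)^2 + (b ⬝ᵥ D *ᵥ b)^2 + (c ⬝ᵥ D *ᵥ c)^2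
      + 2 * ((a ⬝ᵥ D *ᵥ b)^2 + (a ⬝ᵥ D *ᵥ c)^2 + (b ⬝ᵥ D *ᵥ c)^2) := by
  set P : Matrix (Fin 3) (Fin 3) ℝ := Matrix.of ![a, b, c] with hPdef
  have hP1 : Pᵀ * P = 1 := hPtP h
  set N : Matrix (Fin 3) (Fin 3) ℝ := P * D * Pᵀ with hNdef
  have hNe : ∀ i j, N i j = (![a, b, c] i) ⬝ᵥ D *ᵥ (![a, b, c] j) := fun i j =>
    Mentry D a b c i j
  have key : (D * D).trace = (N * N).trace := by
    have h2 : N * N = P * (D * D) * Pᵀ := by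
      rw [hNdef]
      simp only [← Matrix.mul_assoc]
      rw [Matrix.mul_assoc (P * D) Pᵀ P, hP1, Matrix.mul_one]
    rw [h2, trace_conj (D * D) h]
  rw [key, Matrix.trace_fin_three]
  simp only [Matrix.mul_apply, Fin.sum_univ_three]
  simp only [hNe]
  simp only [Matrix.cons_val_zero, Matrix.cons_val_one, Matrix.head_cons,
    Matrix.cons_val_two, Matrix.tail_cons]
  rw [dot_symm D hD b a, dot_symm D hD c a, dot_symm D hD c b]
  ring

lemma onb_swap {a b c : Fin 3 → ℝ} (h : ONB3 a b c) : ONB3 b a c := by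
  obtain ⟨h1, h2, h3, h4, h5, h6⟩ := h
  exact ⟨h2, h1, h3, by rwa [dotProduct_comm], h6, h5⟩

lemma onb_rot {a b c : Fin 3 → ℝ} (h : ONB3 a b c) : ONB3 b c a := by
  obtain ⟨h1, h2, h3, h4, h5, h6⟩ := h
  exact ⟨h2, h3, h1, h6, by rwa [dotProduct_comm], by rwa [dotProduct_comm]⟩

lemma eigen_iff (D : Matrix (Fin 3) (Fin 3) ℝ) (hD : D.IsSymm) {a b c : Fin 3 → ℝ}
    (h : ONB3 a b c) :
    (∃ α : ℝ, D *ᵥ a = α • a) ↔ (a ⬝ᵥ D *ᵥ b = 0 ∧ a ⬝ᵥ D *ᵥ c = 0) := by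
  constructor
  · rintro ⟨α, hα⟩
    constructor
    · rw [dot_symm D hD a b, hα, dotProduct_smul, smul_eq_mul, dotProduct_comm, h.2.2.2.1,
        mul_zero]
    · rw [dot_symm D hD a c, hα, dotProduct_smul, smul_eq_mul, dotProduct_comm, h.2.2.2.2.1,
        mul_zero]
  · rintro ⟨hb, hc⟩
    refine ⟨a ⬝ᵥ D *ᵥ a, ?_⟩
    have e := expand3 h (D *ᵥ a)
    rw [dot_symm D hD b a, dot_symm D hD c a, hb, hc] at e
    simpa using e

lemma shear_aux (D : Matrix (Fin 3) (Fin 3) ℝ) {u v w : Fin 3 → ℝ} (h : ONB3 u v w)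
    {α β γ : ℝ} (hu : D *ᵥ u = α • u) (hv : D *ᵥ v = β • v) (hw : D *ᵥ w = γ • w)
    (hsum : α + β + γ = 0) (hα : 0 ≤ α) (hγ : γ ≤ 0) :
    ∃ a b c : Fin 3 → ℝ, ONB3 a b c ∧
      a ⬝ᵥ D *ᵥ a = 0 ∧ b ⬝ᵥ D *ᵥ b = 0 ∧ c ⬝ᵥ D *ᵥ c = 0 := by
  obtain ⟨h1, h2, h3, h4, h5, h6⟩ := h
  have h4' : v ⬝ᵥ u = 0 := by rw [dotProduct_comm]; exact h4
  have h5' : w ⬝ᵥ u = 0 := by rw [dotProduct_comm]; exact h5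
  have h6' : w ⬝ᵥ v = 0 := by rw [dotProduct_comm]; exact h6
  rcases eq_or_lt_of_le (sub_nonneg.mpr (le_trans hγ hα)) with ht | ht
  · have hα0 : α = 0 := le_antisymm (by linarith) hα
    have hγ0 : γ = 0 := by linarith
    have hβ0 : β = 0 := by linarith
    refine ⟨u, v, w, ⟨h1, h2, h3, h4, h5, h6⟩, ?_, ?_, ?_⟩ <;>
      simp [hu, hv, hw, hα0, hβ0, hγ0]
  · have htne : α - γ ≠ 0 := ne_of_gt ht
    set c0 : ℝ := Real.sqrt (-γ / (α - γ)) with hc0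
    set s0 : ℝ := Real.sqrt (α / (α - γ)) with hs0
    have hc2 : c0 ^ 2 = -γ / (α - γ) := Real.sq_sqrt (div_nonneg (by linarith) ht.le)
    have hs2 : s0 ^ 2 = α / (α - γ) := Real.sq_sqrt (by positivity)
    have hcs : c0 ^ 2 + s0 ^ 2 = 1 := by rw [hc2, hs2]; field_simp; ring
    have hzero : α * c0 ^ 2 + γ * s0 ^ 2 = 0 := by rw [hc2, hs2]; field_simp; ring
    have h2' : α * s0 ^ 2 + γ * c0 ^ 2 = -β := by
      linear_combination (α + γ) * hcs - hzero + hsum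
    have hk : ((Real.sqrt 2)⁻¹ : ℝ) ^ 2 = 1 / 2 := by
      rw [inv_pow, Real.sq_sqrt (by norm_num : (0:ℝ) ≤ 2)]
      norm_num
    refine ⟨c0 • u + s0 • w, (Real.sqrt 2)⁻¹ • (v + (c0 • w - s0 • u)),
      (Real.sqrt 2)⁻¹ • (v - (c0 • w - s0 • u)),
      ⟨?_, ?_, ?_, ?_, ?_, ?_⟩, ?_, ?_, ?_⟩ <;>
    simp only [mulVec_add, mulVec_sub, mulVec_smul, hu, hv, hw, smul_smul,
      dotProduct_add, add_dotProduct, dotProduct_sub, sub_dotProduct,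
      dotProduct_smul, smul_dotProduct, smul_eq_mul, h1, h2, h3, h4, h5, h6, h4', h5', h6'] <;>
    ring_nf
    · exact hcs
    · linear_combination (Real.sqrt 2)⁻¹ ^ 2 * hcs + 2 * hk
    · linear_combination (Real.sqrt 2)⁻¹ ^ 2 * hcs + 2 * hk
    · linear_combination (-((Real.sqrt 2)⁻¹ ^ 2)) * hcs
    · linear_combination hzero
    · linear_combination (Real.sqrt 2)⁻¹ ^ 2 * h2'
    · linear_combination (Real.sqrt 2)⁻¹ ^ 2 * h2'

lemma eigen_exists (D : Matrix (Fin 3) (Fin 3) ℝ) (hD : D.IsSymm) :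
    ∃ u : Fin 3 → (Fin 3 → ℝ), ∃ lam : Fin 3 → ℝ,
      ONB3 (u 0) (u 1) (u 2) ∧ ∀ i, D *ᵥ u i = lam i • u i := by
  have hH : D.IsHermitian := by
    rw [Matrix.IsHermitian, conjTranspose_eq_transpose_of_trivial]; exact hD
  refine ⟨fun i => ⇑(hH.eigenvectorBasis i), hH.eigenvalues, ?_,
    fun i => hH.mulVec_eigenvectorBasis i⟩
  have key : ∀ i j : Fin 3,
      (⇑(hH.eigenvectorBasis i)) ⬝ᵥ (⇑(hH.eigenvectorBasis j))
        = if i = j then (1:ℝ) else 0 := by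
    intro i j
    have h := (orthonormal_iff_ite.mp hH.eigenvectorBasis.orthonormal) i j
    rw [← h]
    simp [PiLp.inner_apply, dotProduct, mul_comm]
  exact ⟨by simpa using key 0 0, by simpa using key 1 1, by simpa using key 2 2,
    by simpa using key 0 1, by simpa using key 0 2, by simpa using key 1 2⟩

lemma dev_isSymm (σ : Matrix (Fin 3) (Fin 3) ℝ) (hσ : σ.IsSymm) : (dev σ).IsSymm := by
  unfold dev Matrix.IsSymm at *
  rw [Matrix.transpose_sub, Matrix.transpose_smul, Matrix.transpose_one, hσ]

lemma trace_dev (σ : Matrix (Fin 3) (Fin 3) ℝ) : (dev σ).trace = 0 := by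
  simp [dev, Matrix.trace_smul, Matrix.trace_one]

set_option maxHeartbeats 1000000 in
/-- bounds on the strain energy over orientations of the cube axes, with the
upper bound attained exactly at pure shear bases of σ', the lower bound attained exactly at
eigenbases of σ', and both kinds of bases exist. -/
theorem stmt19 (κ μ₁ μ₂ : ℝ) (hκ : 0 < κ) (hμ₁ : 0 < μ₁) (hμ₂ : 0 < μ₂) (hμ : μ₁ < μ₂)
    (σ : Matrix (Fin 3) (Fin 3) ℝ) (hσ : σ.IsSymm) :
    (∀ a b c : Fin 3 → ℝ, ONB3 a b c →
      (1/(9*κ)) * σ.trace^2 + (1/(2*μ₂)) * (dev σ * dev σ).trace ≤ twoU κ μ₁ μ₂ σ a b c ∧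
      twoU κ μ₁ μ₂ σ a b c ≤ (1/(9*κ)) * σ.trace^2 + (1/(2*μ₁)) * (dev σ * dev σ).trace) ∧
    (∀ a b c : Fin 3 → ℝ, ONB3 a b c →
      (twoU κ μ₁ μ₂ σ a b c =
          (1/(9*κ)) * σ.trace^2 + (1/(2*μ₁)) * (dev σ * dev σ).trace ↔
        a ⬝ᵥ (dev σ).mulVec a = 0 ∧ b ⬝ᵥ (dev σ).mulVec b = 0 ∧
          c ⬝ᵥ (dev σ).mulVec c = 0)) ∧
    (∀ a b c : Fin 3 → ℝ, ONB3 a b c →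
      (twoU κ μ₁ μ₂ σ a b c =
          (1/(9*κ)) * σ.trace^2 + (1/(2*μ₂)) * (dev σ * dev σ).trace ↔
        (∃ α : ℝ, (dev σ).mulVec a = α • a) ∧ (∃ β : ℝ, (dev σ).mulVec b = β • b) ∧
          (∃ γ : ℝ, (dev σ).mulVec c = γ • c))) ∧
    (∃ a b c : Fin 3 → ℝ, ONB3 a b c ∧
      (∃ α : ℝ, (dev σ).mulVec a = α • a) ∧ (∃ β : ℝ, (dev σ).mulVec b = β • b) ∧
        (∃ γ : ℝ, (dev σ).mulVec c = γ • c)) ∧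
    (∃ a b c : Fin 3 → ℝ, ONB3 a b c ∧
      a ⬝ᵥ (dev σ).mulVec a = 0 ∧ b ⬝ᵥ (dev σ).mulVec b = 0 ∧ c ⬝ᵥ (dev σ).mulVec c = 0) := by
  have hD : (dev σ).IsSymm := dev_isSymm σ hσ
  have hμ₁' : (0:ℝ) < 2 * μ₁ := by linarith
  have hμ₂' : (0:ℝ) < 2 * μ₂ := by linarith
  have hcoeff : (1/(2*μ₂) - 1/(2*μ₁)) < 0 := by
    have : 1/(2*μ₂) < 1/(2*μ₁) := one_div_lt_one_div_of_lt hμ₁' (by linarith)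
    linarith
  have hcne : (1/(2*μ₂) - 1/(2*μ₁)) ≠ 0 := ne_of_lt hcoeff
  refine ⟨?_, ?_, ?_, ?_, ?_⟩
  · -- bounds
    intro a b c h
    have hT := traceDD (dev σ) hD h
    unfold twoU
    constructor
    · have h1 : (0:ℝ) ≤ 1/(2*μ₁) - 1/(2*μ₂) := by linarith
      have h2 : (0:ℝ) ≤ (dev σ * dev σ).trace -
          ((a ⬝ᵥ (dev σ).mulVec a)^2 + (b ⬝ᵥ (dev σ).mulVec b)^2 +
            (c ⬝ᵥ (dev σ).mulVec c)^2) := by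
        rw [hT]
        nlinarith [sq_nonneg (a ⬝ᵥ (dev σ).mulVec b), sq_nonneg (a ⬝ᵥ (dev σ).mulVec c),
          sq_nonneg (b ⬝ᵥ (dev σ).mulVec c)]
      nlinarith [mul_nonneg h1 h2]
    · have h1 : (0:ℝ) ≤ 1/(2*μ₁) - 1/(2*μ₂) := by linarith
      have h2 : (0:ℝ) ≤ (a ⬝ᵥ (dev σ).mulVec a)^2 + (b ⬝ᵥ (dev σ).mulVec b)^2 +
          (c ⬝ᵥ (dev σ).mulVec c)^2 := by positivity
      nlinarith [mul_nonneg h1 h2]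
  · -- upper equality iff pure shear
    intro a b c h
    unfold twoU
    constructor
    · intro heq
      have hS : (a ⬝ᵥ (dev σ).mulVec a)^2 + (b ⬝ᵥ (dev σ).mulVec b)^2 +
          (c ⬝ᵥ (dev σ).mulVec c)^2 = 0 := by
        have := mul_left_cancel₀ hcne (show (1/(2*μ₂) - 1/(2*μ₁)) *
          ((a ⬝ᵥ (dev σ).mulVec a)^2 + (b ⬝ᵥ (dev σ).mulVec b)^2 +
            (c ⬝ᵥ (dev σ).mulVec c)^2) = (1/(2*μ₂) - 1/(2*μ₁)) * 0 by linarith)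
        exact this
      have q1 : (a ⬝ᵥ (dev σ).mulVec a)^2 = 0 := by
        linarith [sq_nonneg (a ⬝ᵥ (dev σ).mulVec a), sq_nonneg (b ⬝ᵥ (dev σ).mulVec b),
          sq_nonneg (c ⬝ᵥ (dev σ).mulVec c)]
      have q2 : (b ⬝ᵥ (dev σ).mulVec b)^2 = 0 := by
        linarith [sq_nonneg (a ⬝ᵥ (dev σ).mulVec a), sq_nonneg (b ⬝ᵥ (dev σ).mulVec b),
          sq_nonneg (c ⬝ᵥ (dev σ).mulVec c)]
      have q3 : (c ⬝ᵥ (dev σ).mulVec c)^2 = 0 := by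
        linarith [sq_nonneg (a ⬝ᵥ (dev σ).mulVec a), sq_nonneg (b ⬝ᵥ (dev σ).mulVec b),
          sq_nonneg (c ⬝ᵥ (dev σ).mulVec c)]
      exact ⟨pow_eq_zero_iff two_ne_zero |>.mp q1, pow_eq_zero_iff two_ne_zero |>.mp q2,
        pow_eq_zero_iff two_ne_zero |>.mp q3⟩
    · rintro ⟨e1, e2, e3⟩
      rw [e1, e2, e3]
      ring
  · -- lower equality iff eigenbasis
    intro a b c h
    have hT := traceDD (dev σ) hD h
    have hiffa := eigen_iff (dev σ) hD h
    have hiffb := eigen_iff (dev σ) hD (onb_swap h)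
    have hiffc := eigen_iff (dev σ) hD (onb_rot (onb_rot h))
    rw [dot_symm (dev σ) hD b a] at hiffb
    rw [dot_symm (dev σ) hD c a, dot_symm (dev σ) hD c b] at hiffc
    unfold twoU
    rw [hiffa, hiffb, hiffc]
    constructor
    · intro heq
      have hS : (a ⬝ᵥ (dev σ).mulVec b)^2 + (a ⬝ᵥ (dev σ).mulVec c)^2 +
          (b ⬝ᵥ (dev σ).mulVec c)^2 = 0 := by
        have h0 := mul_left_cancel₀ hcne (show (1/(2*μ₂) - 1/(2*μ₁)) *
          ((a ⬝ᵥ (dev σ).mulVec a)^2 + (b ⬝ᵥ (dev σ).mulVec b)^2 +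
            (c ⬝ᵥ (dev σ).mulVec c)^2) = (1/(2*μ₂) - 1/(2*μ₁)) *
            (dev σ * dev σ).trace by linarith)
        linarith [hT]
      have q1 : (a ⬝ᵥ (dev σ).mulVec b)^2 = 0 := by
        linarith [sq_nonneg (a ⬝ᵥ (dev σ).mulVec b), sq_nonneg (a ⬝ᵥ (dev σ).mulVec c),
          sq_nonneg (b ⬝ᵥ (dev σ).mulVec c)]
      have q2 : (a ⬝ᵥ (dev σ).mulVec c)^2 = 0 := by
        linarith [sq_nonneg (a ⬝ᵥ (dev σ).mulVec b), sq_nonneg (a ⬝ᵥ (dev σ).mulVec c),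
          sq_nonneg (b ⬝ᵥ (dev σ).mulVec c)]
      have q3 : (b ⬝ᵥ (dev σ).mulVec c)^2 = 0 := by
        linarith [sq_nonneg (a ⬝ᵥ (dev σ).mulVec b), sq_nonneg (a ⬝ᵥ (dev σ).mulVec c),
          sq_nonneg (b ⬝ᵥ (dev σ).mulVec c)]
      have e1 := pow_eq_zero_iff (two_ne_zero (α := ℕ)) |>.mp q1
      have e2 := pow_eq_zero_iff (two_ne_zero (α := ℕ)) |>.mp q2
      have e3 := pow_eq_zero_iff (two_ne_zero (α := ℕ)) |>.mp q3
      exact ⟨⟨e1, e2⟩, ⟨e1, e3⟩, ⟨e2, e3⟩⟩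
    · rintro ⟨⟨e1, e2⟩, ⟨e1', e3⟩, ⟨e2', e3'⟩⟩
      rw [e1, e2, e3] at hT
      rw [hT]
      ring
  · -- eigenbasis exists
    obtain ⟨u, lam, honb, heig⟩ := eigen_exists (dev σ) hD
    exact ⟨u 0, u 1, u 2, honb, ⟨lam 0, heig 0⟩, ⟨lam 1, heig 1⟩, ⟨lam 2, heig 2⟩⟩
  · -- pure shear basis exists
    obtain ⟨u, lam, honb, heig⟩ := eigen_exists (dev σ) hD
    obtain ⟨h1, h2, h3, h4, h5, h6⟩ := honb
    have hd : ∀ i, u i ⬝ᵥ (dev σ) *ᵥ u i = lam i * (u i ⬝ᵥ u i) := by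
      intro i
      rw [heig i, dotProduct_smul, smul_eq_mul]
    have hsum : lam 0 + lam 1 + lam 2 = 0 := by
      have := trace_eq (dev σ) (⟨h1, h2, h3, h4, h5, h6⟩ : ONB3 (u 0) (u 1) (u 2))
      rw [trace_dev] at this
      rw [hd 0, hd 1, hd 2, h1, h2, h3] at this
      linarith
    rcases le_or_gt 0 (lam 0) with hl0 | hl0 <;> rcases le_or_gt 0 (lam 1) with hl1 | hl1
    · exact shear_aux (dev σ) ⟨h1, h2, h3, h4, h5, h6⟩ (heig 0) (heig 1) (heig 2)
        hsum hl0 (by linarith)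
    · have honb' : ONB3 (u 0) (u 2) (u 1) :=
        ⟨h1, h3, h2, h5, h4, by rw [dotProduct_comm]; exact h6⟩
      exact shear_aux (dev σ) honb' (heig 0) (heig 2) (heig 1) (by linarith) hl0 hl1.le
    · have honb' : ONB3 (u 1) (u 2) (u 0) := onb_rot ⟨h1, h2, h3, h4, h5, h6⟩
      exact shear_aux (dev σ) honb' (heig 1) (heig 2) (heig 0) (by linarith) hl1 hl0.le
    · have honb' : ONB3 (u 2) (u 1) (u 0) :=
        ⟨h3, h2, h1, by rw [dotProduct_comm]; exact h6, by rw [dotProduct_comm]; exact h5,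
          by rw [dotProduct_comm]; exact h4⟩
      exact shear_aux (dev σ) honb' (heig 2) (heig 1) (heig 0) (by linarith)
        (by linarith) hl0.le
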